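/- In the ring of formal power series over \mathbb{Z}[t,s], the generating function of the Hankel determinants d_1(n,t,s) = \det( M_{1+i+j,0}(t,s) )_{i,j=0}^{n-1} (with d_1(0,t,s) = 1) satisfies (1 - tx + x^2) \cdot \sum_{n \geq 0} d_1(n,t,s) x^n = 1 + (s-t)x. -/

import Mathlib

open MvPolynomial

/-- Abbreviation: the variable `t` (weight of horizontal steps at positive height). -/
noncomputable abbrev tVar : MvPolynomial (Fin 2) ℤ := MvPolynomial.X 0

/-- Abbreviation: the variable `s` (weight of horizontal steps at height `0`). -/
noncomputable abbrev sVar : MvPolynomial (Fin 2) ℤ := MvPolynomial.X 1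

/-- The weight polynomials `M_{n,k}(t,s)` of Motzkin paths from `(0,0)` to `(n,k)`,
where horizontal steps at height `0` have weight `s` and at positive height weight `t`:
`M_{n,0} = s·M_{n-1,0} + M_{n-1,1}`, and for `k ≥ 1`
`M_{n,k} = M_{n-1,k-1} + t·M_{n-1,k} + M_{n-1,k+1}`, with `M_{n,k} = 0` for `k < 0`
and `M_{0,k} = [k = 0]`. -/
noncomputable def motzkinPoly2 : ℕ → ℤ → MvPolynomial (Fin 2) ℤ
  | 0, k => if k = 0 then 1 else 0
  | n + 1, k =>
      if k < 0 then 0 else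
      if k = 0 then sVar * motzkinPoly2 n 0 + motzkinPoly2 n 1
      else motzkinPoly2 n (k - 1) + tVar * motzkinPoly2 n k + motzkinPoly2 n (k + 1)
  termination_by n _ => n

/-!
Let `A = (M_{i,k})`, lower unitriangular because a path climbs at most one level per step, and let
`J` be the tridiagonal Jacobi matrix with diagonal `s, t, t, …` and ones next to the diagonal.
Cutting a path after its first `i` steps (and reversing the second piece, which up and down steps
of weight `1` allow) gives `M_{i+j+1,0} = ∑_k M_{i,k} M_{j+1,k}`, and removing the last step gives
`M_{j+1,k} = ∑_l M_{j,l} J_{l,k}`. Hence the Hankel matrix is `A J Aᵀ` and `d_1(n) = det J_n`.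
Expanding along the last row, `det J_{n+2} = t det J_{n+1} - det J_n` with `det J_0 = 1` and
`det J_1 = s`, and this recurrence is the claimed identity of generating functions.
-/

namespace Matrix

variable {R : Type*} [CommRing R]

theorem det_of_tridiagonal_succ_succ (f : ℕ → ℕ → R)
    (hf : ∀ i j, i + 1 < j ∨ j + 1 < i → f i j = 0) (n : ℕ) :
    det (of fun i j : Fin (n + 2) => f i j) =
      f (n + 1) (n + 1) * det (of fun i j : Fin (n + 1) => f i j) -
        f (n + 1) n * f n (n + 1) * det (of fun i j : Fin n => f i j) := by
  have minor : det ((of fun i j : Fin (n + 2) => f i j).submatrix (Fin.last (n + 1)).succAbove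
      (Fin.last n).castSucc.succAbove) = f n (n + 1) * det (of fun i j : Fin n => f i j) := by
    rw [det_succ_column _ (Fin.last n), Fin.sum_univ_castSucc, Finset.sum_eq_zero]
    · have inner : ((of fun i j : Fin (n + 2) => f i j).submatrix (Fin.last (n + 1)).succAbove
          (Fin.last n).castSucc.succAbove).submatrix (Fin.last n).succAbove (Fin.last n).succAbove =
          of fun i j : Fin n => f i j := by
        ext i j
        simp [Fin.succAbove_castSucc_of_lt _ _ (Fin.castSucc_lt_last j)]
      rw [inner]
      simp
    · intro i _
      rw [submatrix_apply, of_apply, Fin.succAbove_castSucc_self, hf _ _ (by simp)]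
      simp
  have leading : (of fun i j : Fin (n + 2) => f i j).submatrix Fin.castSucc Fin.castSucc =
      of fun i j : Fin (n + 1) => f i j := rfl
  rw [det_succ_row _ (Fin.last (n + 1)), Fin.sum_univ_castSucc, Fin.sum_univ_castSucc,
    Finset.sum_eq_zero, minor, Fin.succAbove_last, leading]
  · simp only [Fin.val_last, Fin.val_castSucc, odd_add_one_self, Odd.neg_one_pow, Even.add_self,
      Even.neg_pow, one_pow, of_apply, zero_add]
    ring
  · intro j _
    rw [of_apply, hf _ _ (by simp)]
    simp

end Matrix

namespace PowerSeries

variable {R : Type*} [CommRing R]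

theorem one_sub_C_mul_X_add_X_sq_mul_mk (t : R) (d : ℕ → R)
    (hd : ∀ n, d (n + 2) = t * d (n + 1) - d n) :
    (1 - C t * X + X ^ 2) * mk d = C (d 0) + C (d 1 - t * d 0) * X := by
  ext n
  rcases n with _ | _ | n <;> simp [sub_mul, add_mul, coeff_X_pow_mul', mul_assoc, hd]

end PowerSeries

theorem Finset.sum_range_eq_sum_range_of_forall_ge {M : Type*} [AddCommMonoid M] {f : ℕ → M}
    {m n : ℕ} (hm : ∀ l ≥ m, f l = 0) (hn : ∀ l ≥ n, f l = 0) :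
    ∑ l ∈ Finset.range m, f l = ∑ l ∈ Finset.range n, f l := by
  rw [← Finset.eventually_constant_sum hm (le_max_left m n),
    Finset.eventually_constant_sum hn (le_max_right m n)]

open Finset Matrix

noncomputable def motzkin (n k : ℕ) : MvPolynomial (Fin 2) ℤ := motzkinPoly2 n k

/-- The weight of a single step from height `k` to height `l`. -/
noncomputable def jacobiEntry (k l : ℕ) : MvPolynomial (Fin 2) ℤ :=
  if k = l then (if k = 0 then sVar else tVar) else if k + 1 = l ∨ l + 1 = k then 1 else 0

theorem jacobiEntry_comm (k l : ℕ) : jacobiEntry k l = jacobiEntry l k := by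
  unfold jacobiEntry
  split_ifs <;> first | rfl | omega

theorem jacobiEntry_eq_zero {k l : ℕ} (h : k + 1 < l ∨ l + 1 < k) : jacobiEntry k l = 0 := by
  unfold jacobiEntry
  split_ifs <;> first | rfl | omega

theorem jacobiEntry_zero_zero : jacobiEntry 0 0 = sVar := by
  simp [jacobiEntry]

theorem jacobiEntry_succ_succ_self (k : ℕ) : jacobiEntry (k + 1) (k + 1) = tVar := by
  simp [jacobiEntry]

theorem jacobiEntry_succ_self (k : ℕ) : jacobiEntry (k + 1) k = 1 := by
  simp [jacobiEntry]

theorem jacobiEntry_self_succ (k : ℕ) : jacobiEntry k (k + 1) = 1 := by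
  simp [jacobiEntry]

theorem motzkin_zero (k : ℕ) : motzkin 0 k = if k = 0 then 1 else 0 := by
  simp [motzkin, motzkinPoly2]

theorem motzkin_succ_zero (n : ℕ) : motzkin (n + 1) 0 = sVar * motzkin n 0 + motzkin n 1 := by
  simp [motzkin, motzkinPoly2]

theorem motzkin_succ_succ (n k : ℕ) :
    motzkin (n + 1) (k + 1) = motzkin n k + tVar * motzkin n (k + 1) + motzkin n (k + 2) := by
  rw [motzkin, motzkinPoly2, if_neg (by omega), if_neg (by omega)]
  push_cast
  rw [add_sub_cancel_right]
  rfl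

theorem motzkin_eq_zero_of_lt {n k : ℕ} (h : n < k) : motzkin n k = 0 := by
  induction n generalizing k with
  | zero => simp [motzkin_zero, Nat.pos_iff_ne_zero.mp h]
  | succ n ih =>
    obtain ⟨k, rfl⟩ := Nat.exists_eq_add_of_le' (Nat.zero_lt_of_lt h)
    rw [motzkin_succ_succ, ih (by omega), ih (by omega), ih (by omega)]
    ring

theorem motzkin_self (n : ℕ) : motzkin n n = 1 := by
  induction n with
  | zero => simp [motzkin_zero]
  | succ n ih => simp [motzkin_succ_succ, ih, motzkin_eq_zero_of_lt]

theorem motzkin_succ_eq_sum_range (j k : ℕ) :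
    motzkin (j + 1) k = ∑ l ∈ range (k + 2), motzkin j l * jacobiEntry l k := by
  rcases k with _ | k
  · rw [sum_range_succ, sum_range_one, jacobiEntry_zero_zero, jacobiEntry_succ_self,
      motzkin_succ_zero]
    ring
  · rw [sum_range_succ, sum_range_succ, sum_range_succ,
      sum_eq_zero fun l hl => by rw [jacobiEntry_eq_zero (by rw [mem_range] at hl; omega), mul_zero]]
    rw [jacobiEntry_self_succ, jacobiEntry_succ_succ_self, jacobiEntry_succ_self, motzkin_succ_succ]
    ring

theorem motzkin_succ_eq_sum (N j k : ℕ) (h : j < N ∨ k + 2 ≤ N) :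
    motzkin (j + 1) k = ∑ l : Fin N, motzkin j l * jacobiEntry l k := by
  rw [Fin.sum_univ_eq_sum_range (fun l => motzkin j l * jacobiEntry l k),
    motzkin_succ_eq_sum_range]
  have hJ : ∀ l ≥ k + 2, motzkin j l * jacobiEntry l k = 0 := fun l hl => by
    rw [jacobiEntry_eq_zero (by omega), mul_zero]
  refine sum_range_eq_sum_range_of_forall_ge hJ fun l hl => ?_
  rcases h with h | h
  · rw [motzkin_eq_zero_of_lt (by omega), zero_mul]
  · exact hJ l (by omega)

theorem motzkin_add_zero_eq_sum {N : ℕ} (a : ℕ) {b : ℕ} (h : b < N) :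
    motzkin (a + b) 0 = ∑ k : Fin N, motzkin a k * motzkin b k := by
  induction b generalizing a with
  | zero =>
    rw [Fin.sum_univ_eq_sum_range (fun k => motzkin a k * motzkin 0 k)]
    simp [motzkin_zero, h]
  | succ b ih =>
    calc motzkin (a + (b + 1)) 0 = ∑ k : Fin N, motzkin (a + 1) k * motzkin b k := by
          rw [← ih (a + 1) (by omega), add_right_comm, add_assoc]
      _ = ∑ k : Fin N, (∑ l : Fin N, motzkin a l * jacobiEntry l k) * motzkin b k := by
          refine sum_congr rfl fun k _ => ?_
          rcases le_or_gt (k : ℕ) b with hk | hk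
          · rw [motzkin_succ_eq_sum N a k (Or.inr (by omega))]
          · rw [motzkin_eq_zero_of_lt hk, mul_zero, mul_zero]
      _ = ∑ l : Fin N, motzkin a l * ∑ k : Fin N, motzkin b k * jacobiEntry k l := by
          simp_rw [sum_mul, mul_sum]
          rw [sum_comm]
          refine sum_congr rfl fun l _ => sum_congr rfl fun k _ => ?_
          rw [jacobiEntry_comm]
          ring
      _ = ∑ l : Fin N, motzkin a l * motzkin (b + 1) l := by
          simp_rw [motzkin_succ_eq_sum N b _ (Or.inl (by omega))]

noncomputable def motzkinMatrix (n : ℕ) : Matrix (Fin n) (Fin n) (MvPolynomial (Fin 2) ℤ) :=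
  of fun i k => motzkin i k

noncomputable def jacobiMatrix (n : ℕ) : Matrix (Fin n) (Fin n) (MvPolynomial (Fin 2) ℤ) :=
  of fun k l => jacobiEntry k l

theorem det_motzkinMatrix (n : ℕ) : (motzkinMatrix n).det = 1 := by
  have lower : (motzkinMatrix n).IsLowerTriangular := fun i k h =>
    motzkin_eq_zero_of_lt (OrderDual.toDual_lt_toDual.mp h)
  rw [det_of_isLowerTriangular _ lower]
  exact prod_eq_one fun i _ => motzkin_self i

theorem hankel_motzkin_eq_mul (n : ℕ) :
    (of fun i j : Fin n => motzkin (1 + i + j) 0) =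
      motzkinMatrix n * (jacobiMatrix n * (motzkinMatrix n)ᵀ) := by
  ext i j : 1
  simp only [of_apply, mul_apply, transpose_apply, motzkinMatrix, jacobiMatrix]
  rw [show 1 + (i : ℕ) + j = ((j : ℕ) + 1) + i by ring, motzkin_add_zero_eq_sum _ i.isLt]
  refine sum_congr rfl fun k _ => ?_
  rw [mul_comm, motzkin_succ_eq_sum n j k (Or.inl j.isLt)]
  simp_rw [jacobiEntry_comm _ (k : ℕ), mul_comm]

theorem det_jacobiMatrix_succ_succ (n : ℕ) :
    (jacobiMatrix (n + 2)).det = tVar * (jacobiMatrix (n + 1)).det - (jacobiMatrix n).det := by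
  rw [jacobiMatrix, det_of_tridiagonal_succ_succ _ (fun _ _ => jacobiEntry_eq_zero),
    jacobiEntry_succ_succ_self, jacobiEntry_succ_self, jacobiEntry_self_succ]
  simp [jacobiMatrix]

theorem det_hankel_motzkinPoly2 (n : ℕ) :
    (of fun i j : Fin n => motzkinPoly2 (1 + (i : ℕ) + (j : ℕ)) 0).det = (jacobiMatrix n).det := by
  change (of fun i j : Fin n => motzkin (1 + i + j) 0).det = _
  rw [hankel_motzkin_eq_mul, det_mul, det_mul, det_transpose, det_motzkinMatrix, one_mul, mul_one]

/-- `(1 - tx + x^2) · ∑_n d_1(n,t,s) x^n = 1 + (s-t)x` in `(ℤ[t,s])[[x]]`,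
where `d_1(n,t,s) = det(M_{1+i+j,0}(t,s))`. -/
theorem genfun_hankel_det_two_weights_shift_one :
    (1 - PowerSeries.C (R := MvPolynomial (Fin 2) ℤ) tVar * PowerSeries.X +
        PowerSeries.X ^ 2) *
      PowerSeries.mk (fun n =>
        Matrix.det (Matrix.of fun i j : Fin n =>
          motzkinPoly2 (1 + (i : ℕ) + (j : ℕ)) 0)) =
      1 + PowerSeries.C (R := MvPolynomial (Fin 2) ℤ) (sVar - tVar) * PowerSeries.X := by
  simp_rw [det_hankel_motzkinPoly2]
  rw [PowerSeries.one_sub_C_mul_X_add_X_sq_mul_mk _ _ det_jacobiMatrix_succ_succ]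
  simp [jacobiMatrix, jacobiEntry]
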